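/- arXiv:math/9812146 — 8 statements merged into one kernel-verified Lean document; each statement's English description precedes it below -/
import Mathlib

section
/- For every k ≥ 1, the kernel of the homogenization map 𝒫_k : P^{(k)} → P^k equals (H−1)·P^{(k−1)}, i.e. a polynomial f ∈ P^{(k)} satisfies 𝒫_k(f) = 0 if and only if f = (H−1)·g for some g ∈ P^{(k−1)}. -/
open MvPolynomial

noncomputable section

/-- The polynomial ring `R = ℂ[z_1,…,z_n,ξ_1,…,ξ_n]`. -/
abbrev R (n : ℕ) := MvPolynomial (Fin n ⊕ Fin n) ℂ

/-- The variable `z_i`. -/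
def z (n : ℕ) (i : Fin n) : R n := X (Sum.inl i)

/-- The variable `ξ_i`. -/
def ξ (n : ℕ) (i : Fin n) : R n := X (Sum.inr i)

/-- `H = Σ_i z_i ξ_i`. -/
def H (n : ℕ) : R n := ∑ i, z n i * ξ n i

/-- The bidegree weight: `z`-variables have weight `(1,0)`, `ξ`-variables weight `(0,1)`. -/
def bw (n : ℕ) : Fin n ⊕ Fin n → ℕ × ℕ := Sum.elim (fun _ => (1, 0)) (fun _ => (0, 1))

/-- `P^k`: the span of the bidegree-`(k,k)` monomials. -/
def Phom (n k : ℕ) : Submodule ℂ (R n) := weightedHomogeneousSubmodule ℂ (bw n) (k, k)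

/-- `P^{(k)} = ⊕_{j<k+1} P^j`; so `PfiltLT n (k+1)` is `P^{(k)}` and `PfiltLT n k` is `P^{(k-1)}`. -/
def PfiltLT (n k : ℕ) : Submodule ℂ (R n) := ⨆ j ∈ Finset.range k, Phom n j

/-- The homogenization map `𝒫_k`, sending `Σ_{j≤k} f_j` (with `f_j ∈ P^j`) to `Σ_{j≤k} f_j H^{k-j}`. -/
def homog (n k : ℕ) (f : R n) : R n :=
  ∑ j ∈ Finset.range (k + 1), weightedHomogeneousComponent (bw n) (j, j) f * H n ^ (k - j)

/-!
Write `f = Σ_{i ≤ k} f_i` with `f_i ∈ P^i`. Then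
`𝒫_k(f) - f = Σ_i f_i (H^{k-i} - 1) = (H - 1) · Σ_i f_i (1 + H + ⋯ + H^{k-i-1})`,
and the second factor lies in `P^{(k-1)}`, so `𝒫_k(f) = 0` forces `f ∈ (H - 1) P^{(k-1)}`.
Conversely `𝒫_k` is linear and, for `p ∈ P^j` with `j < k`, both `H p` and `p` are
homogenized to `p H^{k-j}`, so `𝒫_k` kills `(H - 1) p`.
-/

open Finset

namespace Homogenization

variable {n : ℕ}

lemma isWeightedHomogeneous_H (n : ℕ) : (H n).IsWeightedHomogeneous (bw n) (1, 1) :=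
  IsWeightedHomogeneous.sum _ _ _ fun i _ =>
    (isWeightedHomogeneous_X ℂ (bw n) (Sum.inl i)).mul
      (isWeightedHomogeneous_X ℂ (bw n) (Sum.inr i))

lemma H_pow_mem_Phom (n m : ℕ) : H n ^ m ∈ Phom n m := by
  simpa [Phom, mem_weightedHomogeneousSubmodule] using (isWeightedHomogeneous_H n).pow m

lemma mul_mem_Phom {i j : ℕ} {p q : R n} (hp : p ∈ Phom n i) (hq : q ∈ Phom n j) :
    p * q ∈ Phom n (i + j) :=
  IsWeightedHomogeneous.mul hp hq

lemma Phom_le_PfiltLT {j k : ℕ} (hj : j < k) : Phom n j ≤ PfiltLT n k :=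
  le_iSup₂ (f := fun j (_ : j ∈ range k) => Phom n j) j (mem_range.mpr hj)

lemma weightedHomogeneousComponent_of_mem_Phom {i j : ℕ} {p : R n} (hp : p ∈ Phom n j) :
    weightedHomogeneousComponent (bw n) (i, i) p = if i = j then p else 0 := by
  simp [weightedHomogeneousComponent_of_mem hp]

lemma sum_weightedHomogeneousComponent_of_mem_PfiltLT {m : ℕ} {f : R n}
    (hf : f ∈ PfiltLT n m) :
    ∑ j ∈ range m, weightedHomogeneousComponent (bw n) (j, j) f = f := by
  let π : R n →ₗ[ℂ] R n := ∑ j ∈ range m, weightedHomogeneousComponent (bw n) (j, j)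
  suffices PfiltLT n m ≤ LinearMap.ker (π - LinearMap.id) by
    simpa [π, sub_eq_zero, LinearMap.sum_apply] using this hf
  refine iSup₂_le fun j hj p hp => ?_
  simp [π, LinearMap.sum_apply, weightedHomogeneousComponent_of_mem_Phom hp,
    mem_range.mp hj]

lemma homog_of_mem_Phom {j k : ℕ} {p : R n} (hp : p ∈ Phom n j) (hj : j ≤ k) :
    homog n k p = p * H n ^ (k - j) := by
  simp [homog, weightedHomogeneousComponent_of_mem_Phom hp, Nat.lt_succ_of_le hj]

def homogₗ (n k : ℕ) : R n →ₗ[ℂ] R n :=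
  ∑ j ∈ range (k + 1),
    LinearMap.mulRight ℂ (H n ^ (k - j)) ∘ₗ weightedHomogeneousComponent (bw n) (j, j)

lemma homogₗ_apply (k : ℕ) (f : R n) : homogₗ n k f = homog n k f := by
  simp [homogₗ, homog, LinearMap.sum_apply]

lemma homog_sub_one_mul_of_mem_Phom {j k : ℕ} {p : R n} (hp : p ∈ Phom n j) (hj : j < k) :
    homog n k ((H n - 1) * p) = 0 := by
  have hHp : H n * p ∈ Phom n (j + 1) := by
    simpa [add_comm] using mul_mem_Phom (H_pow_mem_Phom n 1) hp
  rw [← homogₗ_apply, sub_mul, one_mul, map_sub, homogₗ_apply, homogₗ_apply,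
    homog_of_mem_Phom hHp hj, homog_of_mem_Phom hp hj.le, sub_eq_zero,
    show k - j = k - (j + 1) + 1 by omega, pow_succ']
  ring

lemma homog_sub_one_mul_eq_zero {k : ℕ} {g : R n} (hg : g ∈ PfiltLT n k) :
    homog n k ((H n - 1) * g) = 0 := by
  suffices PfiltLT n k ≤ LinearMap.ker (homogₗ n k ∘ₗ LinearMap.mulLeft ℂ (H n - 1)) by
    simpa [homogₗ_apply] using this hg
  exact iSup₂_le fun j hj p hp => by
    simpa [homogₗ_apply] using homog_sub_one_mul_of_mem_Phom hp (mem_range.mp hj)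

lemma exists_homog_sub_sum_eq_sub_one_mul (k : ℕ) (f : R n) :
    ∃ g ∈ PfiltLT n k, homog n k f - ∑ i ∈ range (k + 1),
      weightedHomogeneousComponent (bw n) (i, i) f = (H n - 1) * g := by
  refine ⟨∑ i ∈ range (k + 1), weightedHomogeneousComponent (bw n) (i, i) f *
      ∑ l ∈ range (k - i), H n ^ l, ?_, ?_⟩
  · refine sum_mem fun i _ => ?_
    rw [mul_sum]
    refine sum_mem fun l hl => Phom_le_PfiltLT (j := i + l) (by grind) ?_
    exact mul_mem_Phom (weightedHomogeneousComponent_isWeightedHomogeneous _ _)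
      (H_pow_mem_Phom n l)
  · simp only [homog, ← sum_sub_distrib, mul_sum, ← mul_sub_one, ← mul_geom_sum]
    exact sum_congr rfl fun _ _ => sum_congr rfl fun _ _ => mul_left_comm _ _ _

end Homogenization

open Homogenization in
theorem stmt_0_general (n : ℕ) (k : ℕ)
    (f : R n) (hf : f ∈ PfiltLT n (k + 1)) :
    homog n k f = 0 ↔ ∃ g ∈ PfiltLT n k, f = (H n - 1) * g := by
  constructor
  · intro hf0
    obtain ⟨g, hg, hfg⟩ := exists_homog_sub_sum_eq_sub_one_mul k f
    rw [sum_weightedHomogeneousComponent_of_mem_PfiltLT hf, hf0] at hfg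
    exact ⟨-g, neg_mem hg, by linear_combination -hfg⟩
  · rintro ⟨g, hg, rfl⟩
    exact homog_sub_one_mul_eq_zero hg

/-- For every `k ≥ 1`, the kernel of the homogenization map
`𝒫_k : P^{(k)} → P^k` equals `(H−1)·P^{(k−1)}`: a polynomial `f ∈ P^{(k)}` satisfies
`𝒫_k(f) = 0` if and only if `f = (H−1)·g` for some `g ∈ P^{(k−1)}`. -/
theorem stmt_0 (n : ℕ) (hn : 1 ≤ n) (k : ℕ) (hk : 1 ≤ k)
    (f : R n) (hf : f ∈ PfiltLT n (k + 1)) :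
    homog n k f = 0 ↔ ∃ g ∈ PfiltLT n k, f = (H n - 1) * g :=
  stmt_0_general n k f hf
end
end

section
/- The homogenization maps intertwine the whole Poisson pencil: for all a,b ∈ ℂ, all k,l ≥ 0, and all f ∈ P^{(k)}, g ∈ P^{(l)}, the bracket {f,g}_{a,b} lies in P^{(k+l)} and 𝒫_{k+l}({f,g}_{a,b}) = {𝒫_k(f), 𝒫_l(g)}_{a,b}. -/
/-!
Both brackets, hence every member of the pencil, are skew-symmetric biderivations. By the Euler
identities for the `z`- and `ξ`-degrees, `H` Poisson-commutes canonically with each `P^j`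
(including `H ∈ P^1`), and `H` is a Casimir of `{·,·}_π`; so `{f H^A, g H^B} = H^(A+B) {f, g}`
for bihomogeneous `f`, `g`. Every term `x_a x_b ∂_s f ∂_t g` of the pencil has the weight of
`x_a` equal to that of `x_s` and the weight of `x_b` equal to that of `x_t`, so the pencil maps
`P^j × P^m` into `P^(j+m)`. On `P^j` homogenization is multiplication by a power of `H`, and the
theorem follows by bi-additivity.
-/

open MvPolynomial

noncomputable section

/-- The canonical Poisson bracket
`{f,g}_can = Σ_i (∂f/∂z_i·∂g/∂ξ_i − ∂f/∂ξ_i·∂g/∂z_i)`. -/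
def brCan (n : ℕ) (f g : R n) : R n :=
  ∑ i, (pderiv (Sum.inl i) f * pderiv (Sum.inr i) g -
        pderiv (Sum.inr i) f * pderiv (Sum.inl i) g)

/-- The `r`-matrix bracket `{f,g}_π`. -/
def brPi (n : ℕ) (f g : R n) : R n :=
  (∑ i, ∑ j, if i < j then z n i * z n j *
      (pderiv (Sum.inl i) f * pderiv (Sum.inl j) g -
       pderiv (Sum.inl j) f * pderiv (Sum.inl i) g) else 0)
  - (∑ i, ∑ j, if i < j then ξ n i * ξ n j *
      (pderiv (Sum.inr i) f * pderiv (Sum.inr j) g -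
       pderiv (Sum.inr j) f * pderiv (Sum.inr i) g) else 0)
  + (∑ i, ∑ j, if i < j then z n i * ξ n i *
      (pderiv (Sum.inl j) f * pderiv (Sum.inr j) g -
       pderiv (Sum.inr j) f * pderiv (Sum.inl j) g) else 0)
  - (∑ i, ∑ j, if j < i then z n i * ξ n i *
      (pderiv (Sum.inl j) f * pderiv (Sum.inr j) g -
       pderiv (Sum.inr j) f * pderiv (Sum.inl j) g) else 0)

/-- The Poisson pencil `{f,g}_{a,b} = a·{f,g}_π + b·H·{f,g}_can`. -/
def brPencil (n : ℕ) (a b : ℂ) (f g : R n) : R n :=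
  a • brPi n f g + b • (H n * brCan n f g)

structure IsSkewBiderivation {A : Type*} [CommRing A] (B : A → A → A) : Prop where
  map_add_right : ∀ f g g', B f (g + g') = B f g + B f g'
  leibniz_right : ∀ f g g', B f (g * g') = g * B f g' + g' * B f g
  skew : ∀ f g, B g f = -B f g

section SkewBiderivation

variable (A : Type*) [CommRing A]

def skewBiderivations : Submodule A (A → A → A) where
  carrier := {B | IsSkewBiderivation B}
  add_mem' {B B'} hB hB' :=
    ⟨fun f g g' => by simp only [Pi.add_apply, hB.map_add_right, hB'.map_add_right]; abel,
     fun f g g' => by simp only [Pi.add_apply, hB.leibniz_right, hB'.leibniz_right]; ring,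
     fun f g => by simp only [Pi.add_apply, hB.skew f g, hB'.skew f g]; abel⟩
  zero_mem' := ⟨fun _ _ _ => by simp, fun _ _ _ => by simp, fun _ _ => by simp⟩
  smul_mem' c {B} hB :=
    ⟨fun f g g' => by simp only [Pi.smul_apply, hB.map_add_right, smul_add],
     fun f g g' => by simp only [Pi.smul_apply, hB.leibniz_right, smul_eq_mul]; ring,
     fun f g => by simp only [Pi.smul_apply, hB.skew f g, smul_neg]⟩

variable {A}

theorem mem_skewBiderivations {B : A → A → A} :
    B ∈ skewBiderivations A ↔ IsSkewBiderivation B := Iff.rfl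

theorem isSkewBiderivation_wedge {R : Type*} [CommSemiring R] [Algebra R A]
    (D₁ D₂ : Derivation R A A) :
    IsSkewBiderivation fun f g => D₁ f * D₂ g - D₂ f * D₁ g where
  map_add_right f g g' := by simp only [map_add]; ring
  leibniz_right f g g' := by simp only [Derivation.leibniz, smul_eq_mul]; ring
  skew f g := by ring

namespace IsSkewBiderivation

variable {B : A → A → A} (hB : IsSkewBiderivation B)
include hB

theorem map_zero_right (f : A) : B f 0 = 0 := by
  simpa using hB.map_add_right f 0 0

theorem map_one_right (f : A) : B f 1 = 0 := by
  simpa using hB.leibniz_right f 1 1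

theorem map_sum_right {ι : Type*} (f : A) (s : Finset ι) (g : ι → A) :
    B f (∑ i ∈ s, g i) = ∑ i ∈ s, B f (g i) := by
  induction s using Finset.cons_induction with
  | empty => simp [hB.map_zero_right]
  | cons i s hi ih => rw [Finset.sum_cons, Finset.sum_cons, hB.map_add_right, ih]

theorem map_sum_sum {ι κ : Type*} (s : Finset ι) (t : Finset κ) (f : ι → A) (g : κ → A) :
    B (∑ i ∈ s, f i) (∑ j ∈ t, g j) = ∑ i ∈ s, ∑ j ∈ t, B (f i) (g j) := by
  rw [hB.skew, hB.map_sum_right, ← Finset.sum_neg_distrib]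
  refine Finset.sum_congr rfl fun j _ => ?_
  rw [← hB.skew, hB.map_sum_right]

theorem map_pow_right_of_eq_zero {f x : A} (h : B f x = 0) (k : ℕ) : B f (x ^ k) = 0 := by
  induction k with
  | zero => rw [pow_zero, hB.map_one_right]
  | succ k ih => rw [pow_succ, hB.leibniz_right, ih, h, mul_zero, mul_zero, add_zero]

theorem map_mul_pow_right {f x : A} (h : B f x = 0) (g : A) (l : ℕ) :
    B f (g * x ^ l) = x ^ l * B f g := by
  rw [hB.leibniz_right, hB.map_pow_right_of_eq_zero h, mul_zero, zero_add]

theorem map_mul_pow_left {g x : A} (h : B g x = 0) (f : A) (k : ℕ) :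
    B (f * x ^ k) g = x ^ k * B f g := by
  rw [hB.skew, hB.map_mul_pow_right h, hB.skew f g, mul_neg, neg_neg]

theorem map_mul_pow_mul_pow {f g x : A} (hf : B f x = 0) (hg : B g x = 0) (hx : B x x = 0)
    (k l : ℕ) : B (f * x ^ k) (g * x ^ l) = x ^ (k + l) * B f g := by
  have hfx : B (f * x ^ k) x = 0 := by rw [hB.map_mul_pow_left hx, hf, mul_zero]
  rw [hB.map_mul_pow_right hfx, hB.map_mul_pow_left hg, pow_add, mul_assoc, mul_left_comm]

end IsSkewBiderivation

end SkewBiderivation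

section WeightedHomogeneous

variable {S σ M : Type*} [AddCommMonoid M] {w : σ → M} {m m' : M}

theorem MvPolynomial.IsWeightedHomogeneous.comp_addMonoidHom [CommSemiring S]
    {f : MvPolynomial σ S} {N : Type*} [AddCommMonoid N] (φ : M →+ N)
    (hf : f.IsWeightedHomogeneous w m) : f.IsWeightedHomogeneous (φ ∘ w) (φ m) := by
  intro d hd
  rw [← hf hd, Finsupp.weight_apply, Finsupp.weight_apply, map_finsuppSum]
  simp

theorem MvPolynomial.IsWeightedHomogeneous.X_mul_pderiv [CommSemiring S] {f : MvPolynomial σ S}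
    {s t : σ} (hst : w s = w t) (hf : f.IsWeightedHomogeneous w m) :
    (X t * pderiv s f).IsWeightedHomogeneous w m := by
  induction hf using IsWeightedHomogeneous.induction_on with
  | zero => simpa using isWeightedHomogeneous_zero S w m
  | add p q _ _ hp hq => rw [map_add, mul_add]; exact hp.add hq
  | monomial d r hd =>
    rw [pderiv_monomial]
    by_cases hds : d s = 0
    · simpa [hds] using isWeightedHomogeneous_zero S w m
    rw [X, monomial_mul]
    refine isWeightedHomogeneous_monomial _ _ _ ?_
    rw [map_add, Finsupp.weight_single, one_smul, ← hst, add_comm,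
      Finsupp.weight_sub_single_add hds, hd]

theorem MvPolynomial.isWeightedHomogeneous_X_mul_X_mul_wedge [CommRing S]
    {f g : MvPolynomial σ S} {a b s t : σ}
    (has : w a = w s) (hbt : w b = w t) (hf : f.IsWeightedHomogeneous w m)
    (hg : g.IsWeightedHomogeneous w m') :
    (X a * X b * (pderiv s f * pderiv t g - pderiv t f * pderiv s g)).IsWeightedHomogeneous w
      (m + m') := by
  rw [show X a * X b * (pderiv s f * pderiv t g - pderiv t f * pderiv s g) =
      (X a * pderiv s f) * (X b * pderiv t g) - (X b * pderiv t f) * (X a * pderiv s g) by ring]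
  exact ((hf.X_mul_pderiv has.symm).mul (hg.X_mul_pderiv hbt.symm)).sub
    ((hf.X_mul_pderiv hbt.symm).mul (hg.X_mul_pderiv has.symm))

end WeightedHomogeneous

section Brackets

variable {n : ℕ}

theorem mem_Phom {k : ℕ} {f : R n} : f ∈ Phom n k ↔ f.IsWeightedHomogeneous (bw n) (k, k) :=
  Iff.rfl

theorem H_mem_Phom : H n ∈ Phom n 1 :=
  IsWeightedHomogeneous.sum _ _ _ fun i _ =>
    (isWeightedHomogeneous_X ℂ (bw n) (Sum.inl i)).mul
      (isWeightedHomogeneous_X ℂ (bw n) (Sum.inr i))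

theorem pderiv_inl_H (i : Fin n) : pderiv (Sum.inl i) (H n) = ξ n i := by
  simp [H, z, ξ, Pi.single_apply]

theorem pderiv_inr_H (i : Fin n) : pderiv (Sum.inr i) (H n) = z n i := by
  simp [H, z, ξ, Pi.single_apply]

theorem sum_z_mul_pderiv {j : ℕ} {f : R n} (hf : f ∈ Phom n j) :
    ∑ i, z n i * pderiv (Sum.inl i) f = j • f := by
  simpa [Fintype.sum_sum_type, bw, z] using
    (hf.comp_addMonoidHom (AddMonoidHom.fst ℕ ℕ)).sum_weight_X_mul_pderiv

theorem sum_ξ_mul_pderiv {j : ℕ} {f : R n} (hf : f ∈ Phom n j) :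
    ∑ i, ξ n i * pderiv (Sum.inr i) f = j • f := by
  simpa [Fintype.sum_sum_type, bw, ξ] using
    (hf.comp_addMonoidHom (AddMonoidHom.snd ℕ ℕ)).sum_weight_X_mul_pderiv

theorem isSkewBiderivation_brCan : IsSkewBiderivation (brCan n) := by
  have h : brCan n = ∑ i, fun f g => pderiv (Sum.inl i) f * pderiv (Sum.inr i) g -
      pderiv (Sum.inr i) f * pderiv (Sum.inl i) g := by
    funext f g
    simp [brCan, Finset.sum_apply]
  rw [← mem_skewBiderivations, h]
  exact Submodule.sum_mem _ fun i _ => isSkewBiderivation_wedge _ _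

theorem isSkewBiderivation_brPi : IsSkewBiderivation (brPi n) := by
  let W : Fin n ⊕ Fin n → Fin n ⊕ Fin n → R n → R n → R n :=
    fun s t f g => pderiv s f * pderiv t g - pderiv t f * pderiv s g
  have h : brPi n =
      (∑ i, ∑ j, if i < j then (z n i * z n j) • W (.inl i) (.inl j) else 0)
      - (∑ i, ∑ j, if i < j then (ξ n i * ξ n j) • W (.inr i) (.inr j) else 0)
      + (∑ i, ∑ j, if i < j then (z n i * ξ n i) • W (.inl j) (.inr j) else 0)
      - (∑ i, ∑ j, if j < i then (z n i * ξ n i) • W (.inl j) (.inr j) else 0) := by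
    funext f g
    simp [brPi, W, Finset.sum_apply, ite_apply]
  have hW : ∀ (p : Prop) [Decidable p] (c : R n) (s t),
      (if p then c • W s t else 0) ∈ skewBiderivations (R n) := by
    intro p _ c s t
    split_ifs
    exacts [Submodule.smul_mem _ c (isSkewBiderivation_wedge _ _), Submodule.zero_mem _]
  rw [← mem_skewBiderivations, h]
  refine sub_mem (add_mem (sub_mem ?_ ?_) ?_) ?_ <;>
    exact Submodule.sum_mem _ fun i _ => Submodule.sum_mem _ fun j _ => hW _ _ _ _

theorem isSkewBiderivation_brPencil (a b : ℂ) : IsSkewBiderivation (brPencil n a b) := by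
  have h : brPencil n a b = a • brPi n + b • (H n • brCan n) := rfl
  rw [← mem_skewBiderivations, h]
  exact add_mem (Submodule.smul_of_tower_mem _ a isSkewBiderivation_brPi)
    (Submodule.smul_of_tower_mem _ b (Submodule.smul_mem _ (H n) isSkewBiderivation_brCan))

theorem brPi_H_right (f : R n) : brPi n f (H n) = 0 := by
  simp only [brPi, pderiv_inl_H, pderiv_inr_H]
  -- once the indices of the last double sum are swapped, the terms cancel for each pair `i < j`
  conv_lhs => enter [2]; rw [Finset.sum_comm]
  simp only [← Finset.sum_sub_distrib, ← Finset.sum_add_distrib]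
  refine Finset.sum_eq_zero fun i _ => Finset.sum_eq_zero fun j _ => ?_
  split_ifs <;> ring

theorem brCan_H_right {j : ℕ} {f : R n} (hf : f ∈ Phom n j) : brCan n f (H n) = 0 := by
  simp only [brCan, pderiv_inl_H, pderiv_inr_H, Finset.sum_sub_distrib]
  simp only [mul_comm (pderiv _ f), sum_z_mul_pderiv hf, sum_ξ_mul_pderiv hf, sub_self]

theorem brPencil_H_right (a b : ℂ) {j : ℕ} {f : R n} (hf : f ∈ Phom n j) :
    brPencil n a b f (H n) = 0 := by
  simp [brPencil, brPi_H_right, brCan_H_right hf]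

theorem X_mul_X_mul_wedge_mem_Phom {a b s t : Fin n ⊕ Fin n} (has : bw n a = bw n s)
    (hbt : bw n b = bw n t) {j m : ℕ} {f g : R n} (hf : f ∈ Phom n j) (hg : g ∈ Phom n m) :
    X a * X b * (pderiv s f * pderiv t g - pderiv t f * pderiv s g) ∈ Phom n (j + m) := by
  rw [mem_Phom, ← Prod.mk_add_mk]
  exact isWeightedHomogeneous_X_mul_X_mul_wedge has hbt hf hg

theorem brPi_mem_Phom {j m : ℕ} {f g : R n} (hf : f ∈ Phom n j) (hg : g ∈ Phom n m) :
    brPi n f g ∈ Phom n (j + m) := by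
  unfold brPi z ξ
  refine sub_mem (add_mem (sub_mem ?_ ?_) ?_) ?_ <;>
    refine Submodule.sum_mem _ fun i _ => Submodule.sum_mem _ fun p _ => ?_ <;>
    -- `by rfl` defers the weight checks until the goal has fixed the variables
    (split_ifs <;>
      [exact X_mul_X_mul_wedge_mem_Phom (by rfl) (by rfl) hf hg; exact Submodule.zero_mem _])

theorem H_mul_brCan_mem_Phom {j m : ℕ} {f g : R n} (hf : f ∈ Phom n j) (hg : g ∈ Phom n m) :
    H n * brCan n f g ∈ Phom n (j + m) := by
  unfold H brCan z ξ
  rw [Finset.sum_mul_sum]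
  exact Submodule.sum_mem _ fun i _ => Submodule.sum_mem _ fun p _ =>
    X_mul_X_mul_wedge_mem_Phom (by rfl) (by rfl) hf hg

theorem brPencil_mem_Phom (a b : ℂ) {j m : ℕ} {f g : R n} (hf : f ∈ Phom n j)
    (hg : g ∈ Phom n m) : brPencil n a b f g ∈ Phom n (j + m) :=
  add_mem (Submodule.smul_mem _ a (brPi_mem_Phom hf hg))
    (Submodule.smul_mem _ b (H_mul_brCan_mem_Phom hf hg))

end Brackets

section Homogenization

variable {n : ℕ}

theorem Phom_le_PfiltLT {j k : ℕ} (h : j < k) : Phom n j ≤ PfiltLT n k :=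
  le_iSup₂_of_le (f := fun j (_ : j ∈ Finset.range k) => Phom n j) j (Finset.mem_range.2 h)
    le_rfl

theorem weightedHomogeneousComponent_of_mem_Phom {i j : ℕ} {f : R n} (hf : f ∈ Phom n j) :
    weightedHomogeneousComponent (bw n) (i, i) f = if i = j then f else 0 := by
  classical
  simp [weightedHomogeneousComponent_of_mem hf]

theorem eq_sum_weightedHomogeneousComponent_of_mem_PfiltLT {k : ℕ} {f : R n}
    (hf : f ∈ PfiltLT n k) :
    f = ∑ j ∈ Finset.range k, weightedHomogeneousComponent (bw n) (j, j) f := by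
  let T : R n →ₗ[ℂ] R n :=
    ∑ j ∈ Finset.range k, weightedHomogeneousComponent (bw n) (j, j) - LinearMap.id
  suffices PfiltLT n k ≤ LinearMap.ker T from (sub_eq_zero.1 (by simpa [T] using this hf)).symm
  refine iSup₂_le fun j hj x hx => ?_
  simp [T, weightedHomogeneousComponent_of_mem_Phom hx, Finset.mem_range.1 hj]

theorem homog_sum {k : ℕ} {ι : Type*} (s : Finset ι) (f : ι → R n) :
    homog n k (∑ i ∈ s, f i) = ∑ i ∈ s, homog n k (f i) := by
  simp only [homog, map_sum, Finset.sum_mul]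
  exact Finset.sum_comm

theorem homog_of_mem_Phom {j k : ℕ} (hjk : j ≤ k) {f : R n} (hf : f ∈ Phom n j) :
    homog n k f = f * H n ^ (k - j) := by
  simp [homog, weightedHomogeneousComponent_of_mem_Phom hf, Nat.lt_succ_of_le hjk]

theorem homog_eq_sum_homog_weightedHomogeneousComponent (k : ℕ) (f : R n) :
    homog n k f = ∑ j ∈ Finset.range (k + 1),
      homog n k (weightedHomogeneousComponent (bw n) (j, j) f) :=
  Finset.sum_congr rfl fun _ hj => (homog_of_mem_Phom (Nat.lt_succ_iff.1 (Finset.mem_range.1 hj))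
    (weightedHomogeneousComponent_isWeightedHomogeneous _ _)).symm

theorem homog_brPencil_of_mem_Phom (a b : ℂ) {j m k l : ℕ} (hjk : j ≤ k) (hml : m ≤ l)
    {f g : R n} (hf : f ∈ Phom n j) (hg : g ∈ Phom n m) :
    homog n (k + l) (brPencil n a b f g) = brPencil n a b (homog n k f) (homog n l g) := by
  rw [homog_of_mem_Phom (by omega) (brPencil_mem_Phom a b hf hg), homog_of_mem_Phom hjk hf,
    homog_of_mem_Phom hml hg, (isSkewBiderivation_brPencil a b).map_mul_pow_mul_pow
      (brPencil_H_right a b hf) (brPencil_H_right a b hg) (brPencil_H_right a b H_mem_Phom),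
    show k - j + (l - m) = k + l - (j + m) by omega, mul_comm]

end Homogenization

theorem stmt_4_general (n : ℕ) (a b : ℂ) (k l : ℕ)
    (f g : R n) (hf : f ∈ PfiltLT n (k + 1)) (hg : g ∈ PfiltLT n (l + 1)) :
    brPencil n a b f g ∈ PfiltLT n (k + l + 1) ∧
    homog n (k + l) (brPencil n a b f g) = brPencil n a b (homog n k f) (homog n l g) := by
  set F := fun j => weightedHomogeneousComponent (bw n) (j, j) f
  set G := fun m => weightedHomogeneousComponent (bw n) (m, m) g
  have hF (j : ℕ) : F j ∈ Phom n j := weightedHomogeneousComponent_isWeightedHomogeneous _ _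
  have hG (m : ℕ) : G m ∈ Phom n m := weightedHomogeneousComponent_isWeightedHomogeneous _ _
  have hB := isSkewBiderivation_brPencil (n := n) a b
  have expand : brPencil n a b f g = ∑ j ∈ Finset.range (k + 1), ∑ m ∈ Finset.range (l + 1),
      brPencil n a b (F j) (G m) := by
    conv_lhs => rw [eq_sum_weightedHomogeneousComponent_of_mem_PfiltLT hf,
      eq_sum_weightedHomogeneousComponent_of_mem_PfiltLT hg]
    exact hB.map_sum_sum _ _ _ _
  refine ⟨?_, ?_⟩
  · rw [expand]
    refine Submodule.sum_mem _ fun j hj => Submodule.sum_mem _ fun m hm => ?_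
    rw [Finset.mem_range] at hj hm
    exact Phom_le_PfiltLT (by omega) (brPencil_mem_Phom a b (hF j) (hG m))
  · rw [expand, homog_eq_sum_homog_weightedHomogeneousComponent k f,
      homog_eq_sum_homog_weightedHomogeneousComponent l g, hB.map_sum_sum, homog_sum]
    refine Finset.sum_congr rfl fun j hj => ?_
    rw [homog_sum]
    refine Finset.sum_congr rfl fun m hm => ?_
    rw [Finset.mem_range] at hj hm
    exact homog_brPencil_of_mem_Phom a b (by omega) (by omega) (hF j) (hG m)

/-- The homogenization maps intertwine the whole Poisson pencil: for all
`a, b ∈ ℂ`, all `k, l ≥ 0`, and all `f ∈ P^{(k)}`, `g ∈ P^{(l)}`, the bracket `{f,g}_{a,b}`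
lies in `P^{(k+l)}` and `𝒫_{k+l}({f,g}_{a,b}) = {𝒫_k(f), 𝒫_l(g)}_{a,b}`. -/
theorem stmt_4 (n : ℕ) (hn : 1 ≤ n) (a b : ℂ) (k l : ℕ)
    (f g : R n) (hf : f ∈ PfiltLT n (k + 1)) (hg : g ∈ PfiltLT n (l + 1)) :
    brPencil n a b f g ∈ PfiltLT n (k + l + 1) ∧
    homog n (k + l) (brPencil n a b f g) = brPencil n a b (homog n k f) (homog n l g) :=
  stmt_4_general n a b k l f g hf hg
end
end

section
/- The function H = Σ_{i=1}^n z_iξ_i is a Casimir of the r-matrix bracket on the whole polynomial ring: for every f ∈ R one has {H, f}_π = 0. -/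
open MvPolynomial

noncomputable section

lemma pderiv_H_inl (n : ℕ) (i : Fin n) : pderiv (Sum.inl i) (H n) = ξ n i := by
  simp [H, z, ξ, map_sum, pderiv_X, Pi.single_apply, Finset.sum_ite_eq]

lemma pderiv_H_inr (n : ℕ) (i : Fin n) : pderiv (Sum.inr i) (H n) = z n i := by
  simp [H, z, ξ, map_sum, pderiv_X, Pi.single_apply, Finset.sum_ite_eq]

/-- `H = Σ_i z_iξ_i` is a Casimir of the `r`-matrix bracket on the whole
polynomial ring: `{H, f}_π = 0` for every `f ∈ R`. -/
theorem stmt_5 (n : ℕ) (hn : 1 ≤ n) (f : R n) : brPi n (H n) f = 0 := by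
  unfold brPi
  simp only [pderiv_H_inl, pderiv_H_inr]
  rw [Finset.sum_comm (s := Finset.univ) (t := Finset.univ)
    (f := fun i j => if j < i then z n i * ξ n i *
      (ξ n j * pderiv (Sum.inr j) f - z n j * pderiv (Sum.inl j) f) else 0)]
  simp only [← Finset.sum_sub_distrib, ← Finset.sum_add_distrib]
  apply Finset.sum_eq_zero; intro i _
  apply Finset.sum_eq_zero; intro j _
  split_ifs with h
  · ring
  · simp
end
end

section
/- The function H = Σ_{i=1}^n z_iξ_i is a Casimir of the whole Poisson pencil restricted to P: for all 1 ≤ i,j ≤ n one has {H, z_iξ_j}_can = 0, and consequently {H, f}_{a,b} = 0 for every f ∈ P and all a,b ∈ ℂ. -/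
open MvPolynomial

noncomputable section

/-- The subalgebra `P ⊂ R` generated by the products `z_iξ_j`. -/
def Psub (n : ℕ) : Subalgebra ℂ (R n) :=
  Algebra.adjoin ℂ {p | ∃ i j : Fin n, p = z n i * ξ n j}

lemma pderiv_H_l (n : ℕ) (k : Fin n) : pderiv (Sum.inl k) (H n) = ξ n k := by
  simp only [H, map_sum, pderiv_mul, z, ξ, pderiv_X]
  rw [Finset.sum_eq_single k] <;> simp +contextual [Sum.inl.injEq, eq_comm]

lemma pderiv_H_r (n : ℕ) (k : Fin n) : pderiv (Sum.inr k) (H n) = z n k := by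
  simp only [H, map_sum, pderiv_mul, z, ξ, pderiv_X]
  rw [Finset.sum_eq_single k] <;> simp +contextual [Sum.inr.injEq, eq_comm]

lemma brPi_H (n : ℕ) (g : R n) : brPi n (H n) g = 0 := by
  unfold brPi
  simp only [pderiv_H_l, pderiv_H_r]
  rw [show (∑ i, ∑ j, if (j:Fin n) < i then z n i * ξ n i *
      (ξ n j * pderiv (Sum.inr j) g - z n j * pderiv (Sum.inl j) g) else 0)
    = ∑ i, ∑ j, if (i:Fin n) < j then z n j * ξ n j *
      (ξ n i * pderiv (Sum.inr i) g - z n i * pderiv (Sum.inl i) g) else 0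
    from Finset.sum_comm]
  rw [← Finset.sum_sub_distrib, ← Finset.sum_add_distrib, ← Finset.sum_sub_distrib]
  apply Finset.sum_eq_zero; intro i _
  rw [← Finset.sum_sub_distrib, ← Finset.sum_add_distrib, ← Finset.sum_sub_distrib]
  apply Finset.sum_eq_zero; intro j _
  by_cases h : i < j <;> simp only [h, if_true, if_false] <;> ring

lemma brCan_gen (n : ℕ) (k l : Fin n) : brCan n (H n) (z n k * ξ n l) = 0 := by
  unfold brCan
  simp only [pderiv_H_l, pderiv_H_r, pderiv_mul, z, ξ, pderiv_X, Pi.single_apply,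
    Sum.inl.injEq, Sum.inr.injEq, reduceCtorEq, if_false, Sum.inr.inj_iff,
    mul_ite, ite_mul, mul_one, mul_zero, zero_mul, one_mul,
    mul_add, add_zero, zero_add]
  rw [Finset.sum_sub_distrib]
  simp [Finset.sum_ite_eq', Finset.mul_sum, mul_comm]

lemma brCan_add (n : ℕ) (f g h : R n) :
    brCan n f (g + h) = brCan n f g + brCan n f h := by
  unfold brCan
  rw [← Finset.sum_add_distrib]
  apply Finset.sum_congr rfl; intro i _
  simp only [map_add]; ring

lemma brCan_mul (n : ℕ) (f g h : R n) :
    brCan n f (g * h) = brCan n f g * h + g * brCan n f h := by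
  unfold brCan
  rw [Finset.sum_mul, Finset.mul_sum, ← Finset.sum_add_distrib]
  apply Finset.sum_congr rfl; intro i _
  simp only [pderiv_mul]; ring

theorem stmt_6_aux (n : ℕ) (hn : 1 ≤ n) :
    (∀ i j : Fin n, brCan n (H n) (z n i * ξ n j) = 0) ∧
    (∀ f ∈ Psub n, ∀ a b : ℂ, brPencil n a b (H n) f = 0) := by
  refine ⟨brCan_gen n, ?_⟩
  intro f hf a b
  have hcan : brCan n (H n) f = 0 := by
    induction hf using Algebra.adjoin_induction with
    | mem x hx =>
      obtain ⟨i, j, rfl⟩ := hx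
      exact brCan_gen n i j
    | algebraMap r =>
      simp [brCan, MvPolynomial.algebraMap_eq, pderiv_C]
    | add x y hx hy ihx ihy =>
      rw [brCan_add, ihx, ihy, add_zero]
    | mul x y hx hy ihx ihy =>
      rw [brCan_mul, ihx, ihy]; ring
  rw [brPencil, brPi_H, hcan, mul_zero, smul_zero, smul_zero, add_zero]

/-- `H = Σ_i z_iξ_i` is a Casimir of the whole Poisson pencil restricted to
`P`: `{H, z_iξ_j}_can = 0` for all `i, j`, and consequently `{H, f}_{a,b} = 0` for every
`f ∈ P` and all `a, b ∈ ℂ`. -/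
theorem stmt_6 (n : ℕ) (hn : 1 ≤ n) :
    (∀ i j : Fin n, brCan n (H n) (z n i * ξ n j) = 0) ∧
    (∀ f ∈ Psub n, ∀ a b : ℂ, brPencil n a b (H n) f = 0) := stmt_6_aux n hn
end
end

section
/- For every index 1 ≤ i ≤ n and every polynomial f ∈ R, the r-matrix and canonical brackets of the functions a_j = z_jξ_j satisfy the exact identity {z_iξ_i, f}_π = (Σ_{j<i} z_jξ_j − Σ_{j>i} z_jξ_j)·{z_iξ_i, f}_can + z_iξ_i·(Σ_{j<i} {z_jξ_j, f}_can − Σ_{j>i} {z_jξ_j, f}_can). -/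
open MvPolynomial

noncomputable section

lemma hz (n : ℕ) (i k : Fin n) :
    pderiv (Sum.inl k) (z n i * ξ n i) = if k = i then ξ n i else 0 := by
  simp [z, ξ, pderiv_mul, pderiv_X, Pi.single_apply, eq_comm]

lemma hxi (n : ℕ) (i k : Fin n) :
    pderiv (Sum.inr k) (z n i * ξ n i) = if k = i then z n i else 0 := by
  simp [z, ξ, pderiv_mul, pderiv_X, Pi.single_apply, eq_comm]

lemma hcan (n : ℕ) (i : Fin n) (f : R n) :
    brCan n (z n i * ξ n i) f =
      ξ n i * pderiv (Sum.inr i) f - z n i * pderiv (Sum.inl i) f := by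
  simp only [brCan, hz, hxi, ite_mul, zero_mul]
  calc (∑ k, ((if k = i then ξ n i * pderiv (Sum.inr k) f else 0)
        - if k = i then z n i * pderiv (Sum.inl k) f else 0))
      = ∑ k, if k = i then ξ n i * pderiv (Sum.inr k) f
          - z n i * pderiv (Sum.inl k) f else 0 :=
        Finset.sum_congr rfl fun k _ => by split <;> simp
    _ = _ := by rw [Finset.sum_ite_eq' Finset.univ i]; simp

lemma sum_delta_left (n : ℕ) (i : Fin n) (g : Fin n → Fin n → R n) :
    (∑ k, ∑ j, if k = i then g k j else 0) = ∑ j, g i j := by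
  calc (∑ k, ∑ j, if k = i then g k j else 0)
      = ∑ k, if k = i then ∑ j, g k j else 0 :=
        Finset.sum_congr rfl fun k _ => by split <;> simp
    _ = _ := by rw [Finset.sum_ite_eq' Finset.univ i]; simp

lemma sum_delta_right (n : ℕ) (i : Fin n) (g : Fin n → Fin n → R n) :
    (∑ k, ∑ j, if j = i then g k j else 0) = ∑ k, g k i := by
  refine Finset.sum_congr rfl fun k _ => ?_
  rw [Finset.sum_ite_eq' Finset.univ i]; simp
/-- For every index `i` and every `f ∈ R`, writing `a_j = z_jξ_j`,
`{z_iξ_i, f}_π = (Σ_{j<i} z_jξ_j − Σ_{j>i} z_jξ_j)·{z_iξ_i, f}_can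
  + z_iξ_i·(Σ_{j<i} {z_jξ_j, f}_can − Σ_{j>i} {z_jξ_j, f}_can)`. -/
theorem stmt_7 (n : ℕ) (hn : 1 ≤ n) (i : Fin n) (f : R n) :
    brPi n (z n i * ξ n i) f =
      ((∑ j, if j < i then z n j * ξ n j else 0) -
       (∑ j, if i < j then z n j * ξ n j else 0)) * brCan n (z n i * ξ n i) f
      + z n i * ξ n i *
        ((∑ j, if j < i then brCan n (z n j * ξ n j) f else 0) -
         (∑ j, if i < j then brCan n (z n j * ξ n j) f else 0)) := by
  simp only [brPi, hz, hxi, hcan]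
  have T1 : (∑ x : Fin n, ∑ y : Fin n,
      if x < y then z n x * z n y *
        ((if x = i then ξ n i else 0) * pderiv (Sum.inl y) f -
         (if y = i then ξ n i else 0) * pderiv (Sum.inl x) f) else 0)
    = (∑ j, if i < j then z n i * z n j * (ξ n i * pderiv (Sum.inl j) f) else 0)
      - (∑ k, if k < i then z n k * z n i * (ξ n i * pderiv (Sum.inl k) f) else 0) := by
    rw [← sum_delta_left n i
          (fun k j => if k < j then z n k * z n j * (ξ n i * pderiv (Sum.inl j) f) else 0),
        ← sum_delta_right n i
          (fun k j => if k < j then z n k * z n j * (ξ n i * pderiv (Sum.inl k) f) else 0),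
        ← Finset.sum_sub_distrib]
    refine Finset.sum_congr rfl fun k _ => ?_
    rw [← Finset.sum_sub_distrib]
    refine Finset.sum_congr rfl fun j _ => ?_
    by_cases hk : k = i <;> by_cases hj : j = i <;> by_cases ho : k < j <;>
      simp [hk, hj, ho] <;> first | ring1 | (split_ifs <;> ring1)
  have T2 : (∑ x : Fin n, ∑ y : Fin n,
      if x < y then ξ n x * ξ n y *
        ((if x = i then z n i else 0) * pderiv (Sum.inr y) f -
         (if y = i then z n i else 0) * pderiv (Sum.inr x) f) else 0)
    = (∑ j, if i < j then ξ n i * ξ n j * (z n i * pderiv (Sum.inr j) f) else 0)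
      - (∑ k, if k < i then ξ n k * ξ n i * (z n i * pderiv (Sum.inr k) f) else 0) := by
    rw [← sum_delta_left n i
          (fun k j => if k < j then ξ n k * ξ n j * (z n i * pderiv (Sum.inr j) f) else 0),
        ← sum_delta_right n i
          (fun k j => if k < j then ξ n k * ξ n j * (z n i * pderiv (Sum.inr k) f) else 0),
        ← Finset.sum_sub_distrib]
    refine Finset.sum_congr rfl fun k _ => ?_
    rw [← Finset.sum_sub_distrib]
    refine Finset.sum_congr rfl fun j _ => ?_
    by_cases hk : k = i <;> by_cases hj : j = i <;> by_cases ho : k < j <;>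
      simp [hk, hj, ho] <;> first | ring1 | (split_ifs <;> ring1)
  have T3 : (∑ x : Fin n, ∑ y : Fin n,
      if x < y then z n x * ξ n x *
        ((if y = i then ξ n i else 0) * pderiv (Sum.inr y) f -
         (if y = i then z n i else 0) * pderiv (Sum.inl y) f) else 0)
    = ∑ k, if k < i then z n k * ξ n k *
        (ξ n i * pderiv (Sum.inr i) f - z n i * pderiv (Sum.inl i) f) else 0 := by
    rw [← sum_delta_right n i (fun k j => if k < j then z n k * ξ n k *
        (ξ n i * pderiv (Sum.inr j) f - z n i * pderiv (Sum.inl j) f) else 0)]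
    refine Finset.sum_congr rfl fun k _ => Finset.sum_congr rfl fun j _ => ?_
    by_cases hj : j = i <;> by_cases ho : k < j <;> simp [hj, ho] <;> ring
  have T4 : (∑ x : Fin n, ∑ y : Fin n,
      if y < x then z n x * ξ n x *
        ((if y = i then ξ n i else 0) * pderiv (Sum.inr y) f -
         (if y = i then z n i else 0) * pderiv (Sum.inl y) f) else 0)
    = ∑ k, if i < k then z n k * ξ n k *
        (ξ n i * pderiv (Sum.inr i) f - z n i * pderiv (Sum.inl i) f) else 0 := by
    rw [← sum_delta_right n i (fun k j => if j < k then z n k * ξ n k *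
        (ξ n i * pderiv (Sum.inr j) f - z n i * pderiv (Sum.inl j) f) else 0)]
    refine Finset.sum_congr rfl fun k _ => Finset.sum_congr rfl fun j _ => ?_
    by_cases hj : j = i <;> by_cases ho : j < k <;> simp [hj, ho] <;> ring
  rw [T1, T2, T3, T4]
  simp only [Finset.sum_mul, Finset.mul_sum, mul_ite, ite_mul, mul_zero, zero_mul,
    mul_sub, sub_zero, ← Finset.sum_sub_distrib, ← Finset.sum_add_distrib]
  refine Finset.sum_congr rfl fun j _ => ?_
  split_ifs <;> first | ring | (exfalso; omega)
end
end

section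
/- The logarithmic differentials d log(ξ_k z_{k+1}/(z_k ξ_{k+1})) are exact eigenvectors of the r-matrix structure relative to the canonical structure with eigenvalue λ_k: for every 1 ≤ k ≤ n−1, writing p = ξ_k z_{k+1} and q = z_k ξ_{k+1}, one has for every polynomial f ∈ R the identity q·{p, f}_π − p·{q, f}_π = λ_k·( q·{p, f}_can − p·{q, f}_can ), where λ_k = Σ_{j≤k} z_jξ_j − Σ_{j>k} z_jξ_j. -/
open MvPolynomial

noncomputable section

lemma dz_mul (n : ℕ) (k k' i : Fin n) :
    pderiv (Sum.inl i) (ξ n k * z n k') = if i = k' then ξ n k else 0 := by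
  simp [z, ξ, pderiv_mul, pderiv_X, Pi.single_apply]
  split_ifs <;> simp_all

lemma dξ_mul (n : ℕ) (k k' i : Fin n) :
    pderiv (Sum.inr i) (ξ n k * z n k') = if i = k then z n k' else 0 := by
  simp [z, ξ, pderiv_mul, pderiv_X, Pi.single_apply]
  split_ifs <;> simp_all

lemma col1 {ι : Type*} [Fintype ι] [DecidableEq ι] {M : Type*} [CommRing M]
    (b : ι) (c : ι → ι → Prop) [∀ i j, Decidable (c i j)]
    (w : ι → ι → M) (P : M) (D : ι → M) :
    ∑ i, ∑ j, (if c i j then w i j *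
        ((if i = b then P else 0) * D j - (if j = b then P else 0) * D i) else 0)
    = ∑ j, (if c b j then w b j * (P * D j) else 0)
      - ∑ i, (if c i b then w i b * (P * D i) else 0) := by
  have h : ∀ i j, (if c i j then w i j *
        ((if i = b then P else 0) * D j - (if j = b then P else 0) * D i) else 0)
      = (if i = b then (if c i j then w i j * (P * D j) else 0) else 0)
        - (if j = b then (if c i j then w i j * (P * D i) else 0) else 0) := by
    intro i j; split_ifs <;> ring
  simp only [h, Finset.sum_sub_distrib, Finset.sum_ite_eq', Finset.mem_univ, if_true]
  rw [Finset.sum_comm (f := fun i j => if i = b then (if c i j then w i j * (P * D j) else 0) else 0)]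
  simp [Finset.sum_ite_eq']

lemma col2 {ι : Type*} [Fintype ι] [DecidableEq ι] {M : Type*} [CommRing M]
    (a b : ι) (c : ι → ι → Prop) [∀ i j, Decidable (c i j)]
    (w : ι → M) (P Q : M) (D E : ι → M) :
    ∑ i, ∑ j, (if c i j then w i *
        ((if j = b then P else 0) * D j - (if j = a then Q else 0) * E j) else 0)
    = ∑ i, (if c i b then w i * (P * D b) else 0)
      - ∑ i, (if c i a then w i * (Q * E a) else 0) := by
  have h : ∀ i j, (if c i j then w i *
        ((if j = b then P else 0) * D j - (if j = a then Q else 0) * E j) else 0)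
      = (if j = b then (if c i j then w i * (P * D j) else 0) else 0)
        - (if j = a then (if c i j then w i * (Q * E j) else 0) else 0) := by
    intro i j; split_ifs <;> subst_vars <;> ring
  simp only [h, Finset.sum_sub_distrib, Finset.sum_ite_eq', Finset.mem_univ, if_true]

lemma brCan_pq (n : ℕ) (a b : Fin n) (f : R n) :
    brCan n (ξ n a * z n b) f =
      ξ n a * pderiv (Sum.inr b) f - z n b * pderiv (Sum.inl a) f := by
  unfold brCan
  rw [show (∑ i, (pderiv (Sum.inl i) (ξ n a * z n b) * pderiv (Sum.inr i) f -
        pderiv (Sum.inr i) (ξ n a * z n b) * pderiv (Sum.inl i) f)) =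
      ∑ i, ((if i = b then ξ n a * pderiv (Sum.inr i) f else 0) -
        (if i = a then z n b * pderiv (Sum.inl i) f else 0)) from
    Finset.sum_congr rfl (fun i _ => by rw [dz_mul, dξ_mul]; split_ifs <;> simp)]
  rw [Finset.sum_sub_distrib, Finset.sum_ite_eq', Finset.sum_ite_eq']
  simp

lemma brPi_pq (n : ℕ) (a b : Fin n) (f : R n) :
    brPi n (ξ n a * z n b) f =
      ((∑ j, if b < j then z n b * z n j * (ξ n a * pderiv (Sum.inl j) f) else 0)
       - ∑ j, if j < b then z n j * z n b * (ξ n a * pderiv (Sum.inl j) f) else 0)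
    - ((∑ j, if a < j then ξ n a * ξ n j * (z n b * pderiv (Sum.inr j) f) else 0)
       - ∑ j, if j < a then ξ n j * ξ n a * (z n b * pderiv (Sum.inr j) f) else 0)
    + ((∑ j, if j < b then z n j * ξ n j * (ξ n a * pderiv (Sum.inr b) f) else 0)
       - ∑ j, if j < a then z n j * ξ n j * (z n b * pderiv (Sum.inl a) f) else 0)
    - ((∑ j, if b < j then z n j * ξ n j * (ξ n a * pderiv (Sum.inr b) f) else 0)
       - ∑ j, if a < j then z n j * ξ n j * (z n b * pderiv (Sum.inl a) f) else 0) := by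
  unfold brPi
  simp only [dz_mul, dξ_mul]
  rw [col1 b (fun i j => i < j) (fun i j => z n i * z n j) (ξ n a) (fun j => pderiv (Sum.inl j) f),
      col1 a (fun i j => i < j) (fun i j => ξ n i * ξ n j) (z n b) (fun j => pderiv (Sum.inr j) f),
      col2 a b (fun i j => i < j) (fun i => z n i * ξ n i) (ξ n a) (z n b)
        (fun j => pderiv (Sum.inr j) f) (fun j => pderiv (Sum.inl j) f),
      col2 a b (fun i j => j < i) (fun i => z n i * ξ n i) (ξ n a) (z n b)
        (fun j => pderiv (Sum.inr j) f) (fun j => pderiv (Sum.inl j) f)]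


set_option maxHeartbeats 2000000 in
/-- The logarithmic differentials `d log(ξ_k z_{k+1}/(z_k ξ_{k+1}))` are
exact eigenvectors of the `r`-matrix structure relative to the canonical structure with
eigenvalue `λ_k = Σ_{j≤k} z_jξ_j − Σ_{j>k} z_jξ_j`: for `1 ≤ k ≤ n−1`, writing
`p = ξ_k z_{k+1}` and `q = z_k ξ_{k+1}`, for every `f ∈ R` one has
`q·{p, f}_π − p·{q, f}_π = λ_k·(q·{p, f}_can − p·{q, f}_can)`.
(Here `kk : Fin n` is the 0-based index of the mathematical variable `z_k`, i.e. `kk = k−1`,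
so `j ≤ kk` means `j ≤ k` in 1-based indexing.) -/
theorem stmt_9 (n : ℕ) (hn : 2 ≤ n) (kk : Fin n) (hk : (kk : ℕ) + 1 < n) (f : R n) :
    z n kk * ξ n ⟨(kk : ℕ) + 1, hk⟩ * brPi n (ξ n kk * z n ⟨(kk : ℕ) + 1, hk⟩) f
      - ξ n kk * z n ⟨(kk : ℕ) + 1, hk⟩ * brPi n (z n kk * ξ n ⟨(kk : ℕ) + 1, hk⟩) f
    = ((∑ j, if j ≤ kk then z n j * ξ n j else 0) -
       (∑ j, if kk < j then z n j * ξ n j else 0)) *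
      (z n kk * ξ n ⟨(kk : ℕ) + 1, hk⟩ * brCan n (ξ n kk * z n ⟨(kk : ℕ) + 1, hk⟩) f
        - ξ n kk * z n ⟨(kk : ℕ) + 1, hk⟩ * brCan n (z n kk * ξ n ⟨(kk : ℕ) + 1, hk⟩) f) := by
  set k' : Fin n := ⟨(kk : ℕ) + 1, hk⟩ with hk'
  have hvk : (k' : ℕ) = (kk : ℕ) + 1 := by rw [hk']
  rw [show z n kk * ξ n k' = ξ n k' * z n kk from mul_comm _ _]
  rw [brPi_pq n kk k' f, brPi_pq n k' kk f, brCan_pq n kk k' f, brCan_pq n k' kk f]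
  simp only [mul_sub, sub_mul, mul_add, add_mul, Finset.mul_sum, Finset.sum_mul,
    mul_ite, ite_mul, mul_zero, zero_mul]
  simp only [← Finset.sum_sub_distrib, ← Finset.sum_add_distrib]
  refine Finset.sum_congr rfl fun j _ => ?_
  have c1 : (j ≤ kk) ↔ ((j:ℕ) ≤ (kk:ℕ)) := Fin.le_def
  have c2 : (kk < j) ↔ ((kk:ℕ) < (j:ℕ)) := Fin.lt_def
  have c3 : (j < k') ↔ ((j:ℕ) < (kk:ℕ) + 1) := by rw [Fin.lt_def, hvk]
  have c4 : (k' < j) ↔ ((kk:ℕ) + 1 < (j:ℕ)) := by rw [Fin.lt_def, hvk]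
  have c5 : (j < kk) ↔ ((j:ℕ) < (kk:ℕ)) := Fin.lt_def
  simp only [c1, c2, c3, c4, c5]
  split_ifs <;> (try (exfalso; omega)) <;> (try ring) <;>
    (try (have hj : j = kk := Fin.ext (by omega); subst hj; ring)) <;>
    (have hj : j = k' := Fin.ext (by rw [hvk]; omega); subst hj; ring)
end
end

section
/- For all indices i ≥ j, the Drinfeld–Sklyanin bracket of z_iξ_j with the tail sum S_j = Σ_{k=j}^n z_kξ_k vanishes: {z_iξ_j, S_j}_DS = 0. -/
open MvPolynomial

noncomputable section

/-- The Drinfeld–Sklyanin bracket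
`{f,g}_DS = Σ_i z_iξ_i(∂_{z_i}f·∂_{ξ_i}g − ∂_{ξ_i}f·∂_{z_i}g)
  − Σ_{i<j} z_iz_j(∂_{z_i}f·∂_{z_j}g − ∂_{z_j}f·∂_{z_i}g)
  + Σ_{i<j} ξ_iξ_j(∂_{ξ_i}f·∂_{ξ_j}g − ∂_{ξ_j}f·∂_{ξ_i}g)
  + 2Σ_{i>j} z_iξ_i(∂_{z_j}f·∂_{ξ_j}g − ∂_{ξ_j}f·∂_{z_j}g)`. -/
def brDS (n : ℕ) (f g : R n) : R n :=
  (∑ i, z n i * ξ n i *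
      (pderiv (Sum.inl i) f * pderiv (Sum.inr i) g -
       pderiv (Sum.inr i) f * pderiv (Sum.inl i) g))
  - (∑ i, ∑ j, if i < j then z n i * z n j *
      (pderiv (Sum.inl i) f * pderiv (Sum.inl j) g -
       pderiv (Sum.inl j) f * pderiv (Sum.inl i) g) else 0)
  + (∑ i, ∑ j, if i < j then ξ n i * ξ n j *
      (pderiv (Sum.inr i) f * pderiv (Sum.inr j) g -
       pderiv (Sum.inr j) f * pderiv (Sum.inr i) g) else 0)
  + 2 * ∑ i, ∑ j, if j < i then z n i * ξ n i *
      (pderiv (Sum.inl j) f * pderiv (Sum.inr j) g -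
       pderiv (Sum.inr j) f * pderiv (Sum.inl j) g) else 0

lemma aux_pderiv_zl (n : ℕ) (i j a : Fin n) :
    pderiv (Sum.inl a) (z n i * ξ n j) = if a = i then ξ n j else 0 := by
  rw [pderiv_mul]; simp [z, ξ, Pi.single_apply]
  split_ifs <;> simp_all

lemma aux_pderiv_zr (n : ℕ) (i j a : Fin n) :
    pderiv (Sum.inr a) (z n i * ξ n j) = if a = j then z n i else 0 := by
  rw [pderiv_mul]; simp [z, ξ, Pi.single_apply]
  split_ifs <;> simp_all [mul_comm]

lemma aux_pderiv_Sl (n : ℕ) (j a : Fin n) :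
    pderiv (Sum.inl a) (∑ k, if j ≤ k then z n k * ξ n k else 0 : R n)
      = if j ≤ a then ξ n a else 0 := by
  rw [map_sum]
  have h : ∀ k : Fin n, pderiv (Sum.inl a) (if j ≤ k then z n k * ξ n k else 0 : R n)
      = if k = a ∧ j ≤ k then ξ n a else 0 := by
    intro k
    split_ifs with h1 h2 h2
    · rw [pderiv_mul]; simp [z, ξ, Pi.single_apply, h2.1]
    · rw [pderiv_mul]
      have : k ≠ a := fun hc => h2 ⟨hc, h1⟩
      simp [z, ξ, Pi.single_apply, this]
    · exact absurd h2.2 h1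
    · simp
  simp only [h]
  simp [ite_and, Finset.sum_ite_eq']

lemma aux_pderiv_Sr (n : ℕ) (j a : Fin n) :
    pderiv (Sum.inr a) (∑ k, if j ≤ k then z n k * ξ n k else 0 : R n)
      = if j ≤ a then z n a else 0 := by
  rw [map_sum]
  have h : ∀ k : Fin n, pderiv (Sum.inr a) (if j ≤ k then z n k * ξ n k else 0 : R n)
      = if k = a ∧ j ≤ k then z n a else 0 := by
    intro k
    split_ifs with h1 h2 h2
    · rw [pderiv_mul]; simp [z, ξ, Pi.single_apply, h2.1, mul_comm]
    · rw [pderiv_mul]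
      have : k ≠ a := fun hc => h2 ⟨hc, h1⟩
      simp [z, ξ, Pi.single_apply, this]
    · exact absurd h2.2 h1
    · simp
  simp only [h]
  simp [ite_and, Finset.sum_ite_eq']

lemma aux_collapse {M : Type*} [AddCommMonoid M] {n : ℕ} (i : Fin n) (P : Fin n → Prop)
    [DecidablePred P] (m : Fin n → M) :
    (∑ x : Fin n, if x = i ∧ P x then m x else 0) = if P i then m i else 0 := by
  rw [Finset.sum_eq_single i]
  · simp
  · intro b _ hb; rw [if_neg (fun h => hb h.1)]
  · intro h; exact absurd (Finset.mem_univ i) h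


set_option maxHeartbeats 2000000 in
lemma aux_merge (n : ℕ) (i j : Fin n) (hij : j ≤ i) :
    ((∑ b : Fin n, if j < b ∧ j ≤ b then ξ n j * ξ n b * (z n i * z n b) else 0)
        - (∑ b : Fin n, if b < j ∧ j ≤ b then ξ n b * ξ n j * (z n i * z n b) else 0))
      + 2 * ((∑ b : Fin n, if i < b ∧ j ≤ i then z n b * ξ n b * (ξ n j * z n i) else 0)
        - (∑ b : Fin n, if j < b ∧ j ≤ j then z n b * ξ n b * (z n i * ξ n j) else 0))
      - ((∑ b : Fin n, if i < b ∧ j ≤ b then z n i * z n b * (ξ n j * ξ n b) else 0)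
        - (∑ b : Fin n, if b < i ∧ j ≤ b then z n b * z n i * (ξ n j * ξ n b) else 0))
      = ∑ b : Fin n,
          ((if b = j ∧ j < i then z n b * ξ n b * (z n i * ξ n j) else 0)
            - (if b = i ∧ j < i then z n b * ξ n b * (z n i * ξ n j) else 0)) := by
  calc ((∑ b : Fin n, if j < b ∧ j ≤ b then ξ n j * ξ n b * (z n i * z n b) else 0)
        - (∑ b : Fin n, if b < j ∧ j ≤ b then ξ n b * ξ n j * (z n i * z n b) else 0))
      + 2 * ((∑ b : Fin n, if i < b ∧ j ≤ i then z n b * ξ n b * (ξ n j * z n i) else 0)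
        - (∑ b : Fin n, if j < b ∧ j ≤ j then z n b * ξ n b * (z n i * ξ n j) else 0))
      - ((∑ b : Fin n, if i < b ∧ j ≤ b then z n i * z n b * (ξ n j * ξ n b) else 0)
        - (∑ b : Fin n, if b < i ∧ j ≤ b then z n b * z n i * (ξ n j * ξ n b) else 0))
      = ∑ b : Fin n,
        (((if j < b ∧ j ≤ b then ξ n j * ξ n b * (z n i * z n b) else 0)
          - (if b < j ∧ j ≤ b then ξ n b * ξ n j * (z n i * z n b) else 0))
        + 2 * ((if i < b ∧ j ≤ i then z n b * ξ n b * (ξ n j * z n i) else 0)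
          - (if j < b ∧ j ≤ j then z n b * ξ n b * (z n i * ξ n j) else 0))
        - ((if i < b ∧ j ≤ b then z n i * z n b * (ξ n j * ξ n b) else 0)
          - (if b < i ∧ j ≤ b then z n b * z n i * (ξ n j * ξ n b) else 0))) := by
        simp only [Finset.sum_sub_distrib, Finset.sum_add_distrib, Finset.mul_sum, mul_sub]
    _ = _ := by
        have hij' : (j : ℕ) ≤ (i : ℕ) := hij
        refine Finset.sum_congr rfl fun b _ => ?_
        by_cases h1 : b = j
        · by_cases h2 : b = i
          · subst h1; subst h2
            simp only [eq_self_iff_true, true_and]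
            simp only [Fin.lt_def, Fin.le_def]
            split_ifs <;> first | ring1 | (exfalso; omega)
          · subst h1
            have h2' : (b : ℕ) ≠ (i : ℕ) := fun hc => h2 (Fin.ext hc)
            rw [if_neg (show ¬(b = i ∧ b < i) from fun hc => h2 hc.1)]
            simp only [eq_self_iff_true, true_and]
            simp only [Fin.lt_def, Fin.le_def]
            split_ifs <;> first | ring1 | (exfalso; omega)
        · have h1' : (b : ℕ) ≠ (j : ℕ) := fun hc => h1 (Fin.ext hc)
          rw [if_neg (show ¬(b = j ∧ j < i) from fun hc => h1 hc.1)]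
          by_cases h2 : b = i
          · subst h2
            simp only [eq_self_iff_true, true_and]
            simp only [Fin.lt_def, Fin.le_def]
            split_ifs <;> first | ring1 | (exfalso; omega)
          · have h2' : (b : ℕ) ≠ (i : ℕ) := fun hc => h2 (Fin.ext hc)
            rw [if_neg (show ¬(b = i ∧ j < i) from fun hc => h2 hc.1)]
            simp only [Fin.lt_def, Fin.le_def]
            split_ifs <;> first | ring1 | (exfalso; omega)


set_option maxHeartbeats 1000000 in
/-- For all indices `i ≥ j`, the Drinfeld–Sklyanin bracket of `z_iξ_j`
with the tail sum `S_j = Σ_{k≥j} z_kξ_k` vanishes: `{z_iξ_j, S_j}_DS = 0`. -/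
theorem stmt_10 (n : ℕ) (hn : 1 ≤ n) (i j : Fin n) (hij : j ≤ i) :
    brDS n (z n i * ξ n j) (∑ k, if j ≤ k then z n k * ξ n k else 0) = 0 := by
  simp only [brDS, aux_pderiv_zl, aux_pderiv_zr, aux_pderiv_Sl, aux_pderiv_Sr]
  simp only [mul_ite, ite_mul, mul_zero, zero_mul, sub_zero, zero_sub, mul_sub, mul_neg]
  -- A term
  have hA : (∑ x : Fin n,
        ((if j ≤ x then if x = i then z n x * ξ n x * (ξ n j * z n x) else 0 else 0) -
          if j ≤ x then if x = j then z n x * ξ n x * (z n i * ξ n x) else 0 else 0))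
      = z n i * ξ n i * (ξ n j * z n i) - z n j * ξ n j * (z n i * ξ n j) := by
    calc (∑ x : Fin n,
          ((if j ≤ x then if x = i then z n x * ξ n x * (ξ n j * z n x) else 0 else 0) -
            if j ≤ x then if x = j then z n x * ξ n x * (z n i * ξ n x) else 0 else 0))
        = (∑ x : Fin n, if x = i ∧ j ≤ x then z n x * ξ n x * (ξ n j * z n x) else 0)
          - (∑ x : Fin n, if x = j ∧ j ≤ x then z n x * ξ n x * (z n i * ξ n x) else 0) := by
          rw [← Finset.sum_sub_distrib]
          refine Finset.sum_congr rfl fun x _ => ?_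
          split_ifs <;> first | tauto | ring1
      _ = _ := by
          rw [aux_collapse i (fun x => j ≤ x) (fun x => z n x * ξ n x * (ξ n j * z n x)),
            aux_collapse j (fun x => j ≤ x) (fun x => z n x * ξ n x * (z n i * ξ n x)),
            if_pos hij, if_pos le_rfl]
  -- B term
  have hB : (∑ x : Fin n, ∑ x_1 : Fin n,
        if x < x_1 then
          (if j ≤ x_1 then if x = i then z n x * z n x_1 * (ξ n j * ξ n x_1) else 0 else 0) -
            (if j ≤ x then if x_1 = i then z n x * z n x_1 * (ξ n j * ξ n x) else 0 else 0)
        else 0)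
      = (∑ b : Fin n, if i < b ∧ j ≤ b then z n i * z n b * (ξ n j * ξ n b) else 0)
        - (∑ b : Fin n, if b < i ∧ j ≤ b then z n b * z n i * (ξ n j * ξ n b) else 0) := by
    calc (∑ x : Fin n, ∑ x_1 : Fin n,
          if x < x_1 then
            (if j ≤ x_1 then if x = i then z n x * z n x_1 * (ξ n j * ξ n x_1) else 0 else 0) -
              (if j ≤ x then if x_1 = i then z n x * z n x_1 * (ξ n j * ξ n x) else 0 else 0)
          else 0)
        = (∑ x : Fin n, ∑ y : Fin n,
            if x = i ∧ (x < y ∧ j ≤ y) then z n x * z n y * (ξ n j * ξ n y) else 0)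
          - (∑ x : Fin n, ∑ y : Fin n,
            if y = i ∧ (x < y ∧ j ≤ x) then z n x * z n y * (ξ n j * ξ n x) else 0) := by
          rw [← Finset.sum_sub_distrib]
          refine Finset.sum_congr rfl fun x _ => ?_
          rw [← Finset.sum_sub_distrib]
          refine Finset.sum_congr rfl fun y _ => ?_
          split_ifs <;> first | tauto | ring1
      _ = _ := by
          congr 1
          · rw [Finset.sum_comm]
            refine Finset.sum_congr rfl fun y _ => ?_
            exact aux_collapse i (fun x => x < y ∧ j ≤ y)
              (fun x => z n x * z n y * (ξ n j * ξ n y))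
          · refine Finset.sum_congr rfl fun x _ => ?_
            exact aux_collapse i (fun y => x < y ∧ j ≤ x)
              (fun y => z n x * z n y * (ξ n j * ξ n x))
  -- C term
  have hC : (∑ x : Fin n, ∑ x_1 : Fin n,
        if x < x_1 then
          (if j ≤ x_1 then if x = j then ξ n x * ξ n x_1 * (z n i * z n x_1) else 0 else 0) -
            (if j ≤ x then if x_1 = j then ξ n x * ξ n x_1 * (z n i * z n x) else 0 else 0)
        else 0)
      = (∑ b : Fin n, if j < b ∧ j ≤ b then ξ n j * ξ n b * (z n i * z n b) else 0)
        - (∑ b : Fin n, if b < j ∧ j ≤ b then ξ n b * ξ n j * (z n i * z n b) else 0) := by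
    calc (∑ x : Fin n, ∑ x_1 : Fin n,
          if x < x_1 then
            (if j ≤ x_1 then if x = j then ξ n x * ξ n x_1 * (z n i * z n x_1) else 0 else 0) -
              (if j ≤ x then if x_1 = j then ξ n x * ξ n x_1 * (z n i * z n x) else 0 else 0)
          else 0)
        = (∑ x : Fin n, ∑ y : Fin n,
            if x = j ∧ (x < y ∧ j ≤ y) then ξ n x * ξ n y * (z n i * z n y) else 0)
          - (∑ x : Fin n, ∑ y : Fin n,
            if y = j ∧ (x < y ∧ j ≤ x) then ξ n x * ξ n y * (z n i * z n x) else 0) := by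
          rw [← Finset.sum_sub_distrib]
          refine Finset.sum_congr rfl fun x _ => ?_
          rw [← Finset.sum_sub_distrib]
          refine Finset.sum_congr rfl fun y _ => ?_
          split_ifs <;> first | tauto | ring1
      _ = _ := by
          congr 1
          · rw [Finset.sum_comm]
            refine Finset.sum_congr rfl fun y _ => ?_
            exact aux_collapse j (fun x => x < y ∧ j ≤ y)
              (fun x => ξ n x * ξ n y * (z n i * z n y))
          · refine Finset.sum_congr rfl fun x _ => ?_
            exact aux_collapse j (fun y => x < y ∧ j ≤ x)
              (fun y => ξ n x * ξ n y * (z n i * z n x))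
  -- D term
  have hD : (∑ x : Fin n, ∑ x_1 : Fin n,
        if x_1 < x then
          (if j ≤ x_1 then if x_1 = i then z n x * ξ n x * (ξ n j * z n x_1) else 0 else 0) -
            (if j ≤ x_1 then if x_1 = j then z n x * ξ n x * (z n i * ξ n x_1) else 0 else 0)
        else 0)
      = (∑ b : Fin n, if i < b ∧ j ≤ i then z n b * ξ n b * (ξ n j * z n i) else 0)
        - (∑ b : Fin n, if j < b ∧ j ≤ j then z n b * ξ n b * (z n i * ξ n j) else 0) := by
    calc (∑ x : Fin n, ∑ x_1 : Fin n,
          if x_1 < x then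
            (if j ≤ x_1 then if x_1 = i then z n x * ξ n x * (ξ n j * z n x_1) else 0 else 0) -
              (if j ≤ x_1 then if x_1 = j then z n x * ξ n x * (z n i * ξ n x_1) else 0 else 0)
          else 0)
        = (∑ x : Fin n, ∑ y : Fin n,
            if y = i ∧ (y < x ∧ j ≤ y) then z n x * ξ n x * (ξ n j * z n y) else 0)
          - (∑ x : Fin n, ∑ y : Fin n,
            if y = j ∧ (y < x ∧ j ≤ y) then z n x * ξ n x * (z n i * ξ n y) else 0) := by
          rw [← Finset.sum_sub_distrib]
          refine Finset.sum_congr rfl fun x _ => ?_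
          rw [← Finset.sum_sub_distrib]
          refine Finset.sum_congr rfl fun y _ => ?_
          split_ifs <;> first | tauto | ring1
      _ = _ := by
          congr 1
          · refine Finset.sum_congr rfl fun x _ => ?_
            exact aux_collapse i (fun y => y < x ∧ j ≤ y)
              (fun y => z n x * ξ n x * (ξ n j * z n y))
          · refine Finset.sum_congr rfl fun x _ => ?_
            exact aux_collapse j (fun y => y < x ∧ j ≤ y)
              (fun y => z n x * ξ n x * (z n i * ξ n y))
  have hm := aux_merge n i j hij
  have hg : (∑ b : Fin n,
        ((if b = j ∧ j < i then z n b * ξ n b * (z n i * ξ n j) else 0)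
          - (if b = i ∧ j < i then z n b * ξ n b * (z n i * ξ n j) else 0)))
      = (if j < i then z n j * ξ n j * (z n i * ξ n j) else 0)
        - (if j < i then z n i * ξ n i * (z n i * ξ n j) else 0) := by
    rw [Finset.sum_sub_distrib]
    congr 1
    · exact aux_collapse j (fun _ => j < i) (fun b => z n b * ξ n b * (z n i * ξ n j))
    · exact aux_collapse i (fun _ => j < i) (fun b => z n b * ξ n b * (z n i * ξ n j))
  rcases eq_or_lt_of_le hij with heq | hlt
  · subst heq
    simp only [lt_self_iff_false, le_refl, if_false, if_true, and_false, false_and,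
      and_true, true_and] at hg hm hB hC hD
    linear_combination hA - hB + hC + 2 * hD + hm + hg
  · rw [if_pos hlt, if_pos hlt] at hg
    linear_combination hA - hB + hC + 2 * hD + hm + hg
end
end

section
/- Let m = (m_1,…,m_n) and m̄ = (m̄_1,…,m̄_n) be tuples of nonnegative integers. Suppose that for every j: (Σ_{i<j} m_i − Σ_{i>j} m_i + Σ_i m̄_i + m̄_j)·m_j = 0 and (Σ_{i<j} m̄_i − Σ_{i>j} m̄_i + Σ_i m_i + m_j)·m̄_j = 0. Then either m̄ = 0 and at most one m_j is nonzero, or m = 0 and at most one m̄_j is nonzero; conversely every such pair satisfies the two conditions. Hence the harmonic multidegrees for the degree-zero part of the Drinfeld–Sklyanin structure in affine coordinates are exactly those of monomial forms in a single variable z_j or a single variable z̄_j. -/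
open Finset

lemma aux14 (n : ℕ) (m mb : Fin n → ℕ)
    (h1 : ∀ j : Fin n,
        ((∑ i, if i < j then (m i : ℤ) else 0) - (∑ i, if j < i then (m i : ℤ) else 0)
          + (∑ i, (mb i : ℤ)) + (mb j : ℤ)) * (m j : ℤ) = 0)
    (hm : ∃ j, m j ≠ 0) :
    mb = 0 ∧ ∀ j k : Fin n, m j ≠ 0 → m k ≠ 0 → j = k := by
  classical
  obtain ⟨j0, hj0⟩ := hm
  set s : Finset (Fin n) := Finset.univ.filter (fun i => m i ≠ 0) with hsdef
  have hs : s.Nonempty := ⟨j0, by simp [hsdef, hj0]⟩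
  set jx := s.max' hs with hjx
  have hmx : m jx ≠ 0 := by
    have := s.max'_mem hs
    simpa [hsdef] using this
  have hgt : ∀ i, jx < i → m i = 0 := by
    intro i hi
    by_contra h
    exact absurd (s.le_max' i (by simp [hsdef, h])) (not_le.mpr hi)
  have hSgt : (∑ i, if jx < i then (m i : ℤ) else 0) = 0 := by
    refine Finset.sum_eq_zero fun i _ => ?_
    split_ifs with hlt
    · simp [hgt i hlt]
    · rfl
  have hbx : ((∑ i, if i < jx then (m i : ℤ) else 0)
      - (∑ i, if jx < i then (m i : ℤ) else 0)
      + (∑ i, (mb i : ℤ)) + (mb jx : ℤ)) = 0 := by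
    rcases mul_eq_zero.mp (h1 jx) with h | h
    · exact h
    · exact absurd (by exact_mod_cast h) hmx
  have hnn1 : 0 ≤ (∑ i : Fin n, if i < jx then (m i : ℤ) else 0) :=
    Finset.sum_nonneg fun i _ => by positivity
  have hnn2 : 0 ≤ (∑ i : Fin n, (mb i : ℤ)) := Finset.sum_nonneg fun i _ => by positivity
  have hnn3 : (0:ℤ) ≤ (mb jx : ℤ) := by positivity
  have hSmb : (∑ i : Fin n, (mb i : ℤ)) = 0 := by rw [hSgt] at hbx; linarith
  have hmb : mb = 0 := by
    funext i
    have := (Finset.sum_eq_zero_iff_of_nonneg (fun i _ => by positivity)).mp hSmb i (mem_univ i)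
    exact_mod_cast this
  refine ⟨hmb, ?_⟩
  set jn := s.min' hs with hjn
  have hlt0 : ∀ i, i < jn → m i = 0 := by
    intro i hi
    by_contra h
    exact absurd (s.min'_le i (by simp [hsdef, h])) (not_le.mpr hi)
  have hmn : m jn ≠ 0 := by
    have := s.min'_mem hs
    simpa [hsdef] using this
  have hSlt : (∑ i, if i < jn then (m i : ℤ) else 0) = 0 := by
    refine Finset.sum_eq_zero fun i _ => ?_
    split_ifs with hlt
    · simp [hlt0 i hlt]
    · rfl
  have hbn : ((∑ i, if i < jn then (m i : ℤ) else 0)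
      - (∑ i, if jn < i then (m i : ℤ) else 0)
      + (∑ i, (mb i : ℤ)) + (mb jn : ℤ)) = 0 := by
    rcases mul_eq_zero.mp (h1 jn) with h | h
    · exact h
    · exact absurd (by exact_mod_cast h) hmn
  have hmbjn : (mb jn : ℤ) = 0 := by simp [hmb]
  have hSgtn : (∑ i : Fin n, if jn < i then (m i : ℤ) else 0) = 0 := by
    rw [hSlt, hSmb, hmbjn] at hbn; linarith
  have hzero : ∀ i, jn < i → m i = 0 := by
    intro i hi
    have := (Finset.sum_eq_zero_iff_of_nonneg
      (fun i _ => by split_ifs <;> positivity)).mp hSgtn i (mem_univ i)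
    rw [if_pos hi] at this
    exact_mod_cast this
  have key : ∀ j, m j ≠ 0 → j = jn := by
    intro j hj
    have hle : jn ≤ j := s.min'_le j (by simp [hsdef, hj])
    rcases lt_or_eq_of_le hle with h | h
    · exact absurd (hzero j h) hj
    · exact h.symm
  intro j k hj hk
  rw [key j hj, key k hk]

lemma aux14' (n : ℕ) (m mb : Fin n → ℕ)
    (hmb : mb = 0) (huniq : ∀ j k : Fin n, m j ≠ 0 → m k ≠ 0 → j = k) :
    (∀ j : Fin n,
        ((∑ i, if i < j then (m i : ℤ) else 0) - (∑ i, if j < i then (m i : ℤ) else 0)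
          + (∑ i, (mb i : ℤ)) + (mb j : ℤ)) * (m j : ℤ) = 0) ∧
     (∀ j : Fin n,
        ((∑ i, if i < j then (mb i : ℤ) else 0) - (∑ i, if j < i then (mb i : ℤ) else 0)
          + (∑ i, (m i : ℤ)) + (m j : ℤ)) * (mb j : ℤ) = 0) := by
  subst hmb
  constructor
  · intro j
    by_cases hj : m j = 0
    · simp [hj]
    have hz : ∀ i, i ≠ j → m i = 0 := by
      intro i hi
      by_contra h
      exact hi (huniq i j h hj)
    have h1 : (∑ i, if i < j then (m i : ℤ) else 0) = 0 := by
      refine Finset.sum_eq_zero fun i _ => ?_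
      split_ifs with hlt
      · simp [hz i (ne_of_lt hlt)]
      · rfl
    have h2 : (∑ i, if j < i then (m i : ℤ) else 0) = 0 := by
      refine Finset.sum_eq_zero fun i _ => ?_
      split_ifs with hlt
      · simp [hz i (ne_of_gt hlt)]
      · rfl
    simp [h1, h2]
  · intro j; simp

/-- Let `m, m̄` be tuples of nonnegative integers such that for every `j`,
`(Σ_{i<j} m_i − Σ_{i>j} m_i + Σ_i m̄_i + m̄_j)·m_j = 0` and
`(Σ_{i<j} m̄_i − Σ_{i>j} m̄_i + Σ_i m_i + m_j)·m̄_j = 0`.  Then either `m̄ = 0` and at most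
one `m_j` is nonzero, or `m = 0` and at most one `m̄_j` is nonzero; and conversely every
such pair satisfies the two conditions.  Hence the harmonic multidegrees for the degree-zero
part of the Drinfeld–Sklyanin structure in affine coordinates are exactly those of monomial
forms in a single variable `z_j` or a single variable `z̄_j`. -/
theorem stmt_14 (n : ℕ) (m mb : Fin n → ℕ) :
    ((∀ j : Fin n,
        ((∑ i, if i < j then (m i : ℤ) else 0) - (∑ i, if j < i then (m i : ℤ) else 0)
          + (∑ i, (mb i : ℤ)) + (mb j : ℤ)) * (m j : ℤ) = 0) ∧
     (∀ j : Fin n,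
        ((∑ i, if i < j then (mb i : ℤ) else 0) - (∑ i, if j < i then (mb i : ℤ) else 0)
          + (∑ i, (m i : ℤ)) + (m j : ℤ)) * (mb j : ℤ) = 0))
    ↔ ((mb = 0 ∧ ∀ j k : Fin n, m j ≠ 0 → m k ≠ 0 → j = k) ∨
       (m = 0 ∧ ∀ j k : Fin n, mb j ≠ 0 → mb k ≠ 0 → j = k)) := by
  constructor
  · rintro ⟨h1, h2⟩
    by_cases hm : ∃ j, m j ≠ 0
    · exact Or.inl (aux14 n m mb h1 hm)
    · by_cases hmb : ∃ j, mb j ≠ 0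
      · exact Or.inr (aux14 n mb m h2 hmb)
      · push_neg at hmb
        exact Or.inr ⟨funext fun i => by
          have := not_exists.mp hm i; simpa using this,
          fun j k hj _ => absurd (hmb j) hj⟩
  · rintro (⟨hmb, huniq⟩ | ⟨hm, huniq⟩)
    · exact aux14' n m mb hmb huniq
    · exact (aux14' n mb m hm huniq).symm
end
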